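/- arXiv:cs/0507067 — 5 statements merged into one kernel-verified Lean document; each statement's English description precedes it below -/
import Mathlib

section
/- If a correct T-tiling of the first quadrant exists, then there is a model I of the schema S_T (with a set Tile, subsets D_1,...,D_k partitioning Tile, and binary relations Right and Up satisfying: every tile has a Right-successor and an Up-successor in Tile, Right and Up are functional on Tile, and the adjacency conditions H and V hold along Right and Up respectively) in which Tile is nonempty and the grid-closure condition holds: for all x,y,z,y',z', Right(x,y) ∧ Up(y,z) ∧ Up(x,y') ∧ Right(y',z') implies z = z'. -/
/-- If a correct T-tiling of the first quadrant exists, then there is a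
model of the tiling schema S_T (partition of Tile into the D_h, existence of Right/Up
successors in Tile, functionality of Right and Up on Tile, adjacency conditions) in
which Tile is nonempty and the grid-closure (confluence) condition holds. -/
theorem stmt0 {D : Type} (H V : D → D → Prop)
    (t : ℕ → ℕ → D)
    (hH : ∀ i j, H (t i j) (t (i + 1) j))
    (hV : ∀ i j, V (t i j) (t i (j + 1))) :
    ∃ (Δ : Type) (Tile : Δ → Prop) (Dp : D → Δ → Prop) (Right Up : Δ → Δ → Prop),
      (∀ x, Tile x → ∃! h, Dp h x) ∧
      (∀ h x, Dp h x → Tile x) ∧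
      (∀ x, Tile x → ∃ y, Right x y ∧ Tile y) ∧
      (∀ x, Tile x → ∃ y, Up x y ∧ Tile y) ∧
      (∀ x y y', Tile x → Right x y → Right x y' → y = y') ∧
      (∀ x y y', Tile x → Up x y → Up x y' → y = y') ∧
      (∀ h h' x y, Dp h x → Right x y → Dp h' y → H h h') ∧
      (∀ h h' x y, Dp h x → Up x y → Dp h' y → V h h') ∧
      (∃ x, Tile x) ∧
      (∀ x y z y' z', Right x y → Up y z → Up x y' → Right y' z' → z = z') := by
  refine ⟨ℕ × ℕ, fun _ => True, fun h x => t x.1 x.2 = h,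
    fun x y => y = (x.1 + 1, x.2), fun x y => y = (x.1, x.2 + 1),
    ?_, ?_, ?_, ?_, ?_, ?_, ?_, ?_, ?_, ?_⟩
  · exact fun x _ => ⟨t x.1 x.2, rfl, fun h hh => hh.symm⟩
  · exact fun _ _ _ => trivial
  · exact fun x _ => ⟨_, rfl, trivial⟩
  · exact fun x _ => ⟨_, rfl, trivial⟩
  · exact fun x y y' _ hy hy' => hy.trans hy'.symm
  · exact fun x y y' _ hy hy' => hy.trans hy'.symm
  · rintro h h' x y rfl rfl rfl; exact hH x.1 x.2
  · rintro h h' x y rfl rfl rfl; exact hV x.1 x.2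
  · exact ⟨(0, 0), trivial⟩
  · rintro x y z y' z' rfl rfl rfl rfl; rfl
end

section
/- Let I be a structure with unary predicates Tile, D_1,...,D_k and binary relations Right, Up such that: (1) every element of Tile belongs to exactly one D_h; (2) every element of Tile has a Right-successor in Tile and an Up-successor in Tile; (3) Right and Up are functional on Tile; (4) for all x,y,z,y',z', Right(x,y) ∧ Up(y,z) ∧ Up(x,y') ∧ Right(y',z') implies z = z'; (5) whenever D_i(x) and Right(x,y) then (D_i, D_j) ∈ H for the unique j with D_j(y), and similarly for Up and V; and (6) Tile is nonempty. Then there exists a correct T-tiling of ℕ × ℕ. -/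
/-- From a structure satisfying all the constraints of the tiling
schema S_T (partition, successor existence, functionality, grid confluence,
adjacency, nonemptiness of Tile), a correct T-tiling of ℕ × ℕ can be extracted. -/
theorem stmt1 {D : Type} (H V : D → D → Prop)
    {Δ : Type} (Tile : Δ → Prop) (Dp : D → Δ → Prop) (Right Up : Δ → Δ → Prop)
    (h1 : ∀ x, Tile x → ∃! h, Dp h x)
    (h2r : ∀ x, Tile x → ∃ y, Right x y ∧ Tile y)
    (h2u : ∀ x, Tile x → ∃ y, Up x y ∧ Tile y)
    (h3r : ∀ x y y', Tile x → Right x y → Right x y' → y = y')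
    (h3u : ∀ x y y', Tile x → Up x y → Up x y' → y = y')
    (h4 : ∀ x y z y' z', Right x y → Up y z → Up x y' → Right y' z' → z = z')
    (h5r : ∀ h h' x y, Dp h x → Right x y → Dp h' y → H h h')
    (h5u : ∀ h h' x y, Dp h x → Up x y → Dp h' y → V h h')
    (h6 : ∃ x, Tile x) :
    ∃ t : ℕ → ℕ → D,
      (∀ i j, H (t i j) (t (i + 1) j)) ∧ (∀ i j, V (t i j) (t i (j + 1))) := by
  obtain ⟨x0, hx0⟩ := h6
  choose! r hrR hrT using h2r
  choose! u huU huT using h2u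
  obtain ⟨d0, -, -⟩ := h1 x0 hx0
  have : Nonempty D := ⟨d0⟩
  choose! dd hdd hdd' using h1
  set f : ℕ → ℕ → Δ := fun i j => u^[j] (r^[i] x0) with hf
  have hTr : ∀ i, Tile (r^[i] x0) := by
    intro i; induction i with
    | zero => exact hx0
    | succ n ih => rw [Function.iterate_succ_apply']; exact hrT _ ih
  have hT : ∀ i j, Tile (f i j) := by
    intro i j; induction j with
    | zero => exact hTr i
    | succ n ih =>
      show Tile (u^[n+1] (r^[i] x0))
      rw [Function.iterate_succ_apply']; exact huT _ ih
  have hUp : ∀ i j, Up (f i j) (f i (j+1)) := by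
    intro i j
    have : f i (j+1) = u (f i j) := Function.iterate_succ_apply' u j _
    rw [this]; exact huU _ (hT i j)
  have hRight : ∀ j i, Right (f i j) (f (i+1) j) := by
    intro j
    induction j with
    | zero =>
      intro i
      show Right (r^[i] x0) (r^[i+1] x0)
      rw [Function.iterate_succ_apply']
      exact hrR _ (hTr i)
    | succ n ih =>
      intro i
      have ha : f i (n+1) = u (f i n) := Function.iterate_succ_apply' u n _
      have hb : f (i+1) (n+1) = u (f (i+1) n) := Function.iterate_succ_apply' u n _
      rw [ha, hb]
      have h1' : Right (f i n) (f (i+1) n) := ih i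
      have key : u (f (i+1) n) = r (u (f i n)) :=
        h4 (f i n) (f (i+1) n) _ _ _ h1' (huU _ (hT (i+1) n)) (huU _ (hT i n))
          (hrR _ (huT _ (hT i n)))
      rw [key]
      exact hrR _ (huT _ (hT i n))
  refine ⟨fun i j => dd (f i j), fun i j => ?_, fun i j => ?_⟩
  · exact h5r _ _ _ _ (hdd _ (hT i j)) (hRight j i) (hdd _ (hT (i+1) j))
  · exact h5u _ _ _ _ (hdd _ (hT i j)) (hUp i j) (hdd _ (hT i (j+1)))
end

section
/- For a tiling instance T = (D, H, V), a correct T-tiling exists if and only if there exists a structure I satisfying all the schema constraints of S_T (partition of Tile into the D_h, existence of Right- and Up-successors within Tile, functionality of Right and Up on Tile, adjacency conditions) together with: Tile is nonempty, and the confluence property ∀x y z y' z'. Right(x,y) ∧ Up(y,z) ∧ Up(x,y') ∧ Right(y',z') → z = z'. -/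
/-- A correct T-tiling exists iff there is a structure satisfying all
the constraints of the tiling schema S_T together with nonemptiness of Tile and the
confluence (grid-closure) property. -/
theorem stmt2 {D : Type} (H V : D → D → Prop) :
    (∃ t : ℕ → ℕ → D,
        (∀ i j, H (t i j) (t (i + 1) j)) ∧ (∀ i j, V (t i j) (t i (j + 1)))) ↔
    (∃ (Δ : Type) (Tile : Δ → Prop) (Dp : D → Δ → Prop) (Right Up : Δ → Δ → Prop),
      (∀ x, Tile x → ∃! h, Dp h x) ∧
      (∀ h x, Dp h x → Tile x) ∧
      (∀ x, Tile x → ∃ y, Right x y ∧ Tile y) ∧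
      (∀ x, Tile x → ∃ y, Up x y ∧ Tile y) ∧
      (∀ x y y', Tile x → Right x y → Right x y' → y = y') ∧
      (∀ x y y', Tile x → Up x y → Up x y' → y = y') ∧
      (∀ h h' x y, Dp h x → Right x y → Dp h' y → H h h') ∧
      (∀ h h' x y, Dp h x → Up x y → Dp h' y → V h h') ∧
      (∃ x, Tile x) ∧
      (∀ x y z y' z', Right x y → Up y z → Up x y' → Right y' z' → z = z')) := by
  constructor
  · rintro ⟨t, hH, hV⟩
    refine ⟨ℕ × ℕ, fun _ => True, fun h x => t x.1 x.2 = h,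
      fun x y => y = (x.1 + 1, x.2), fun x y => y = (x.1, x.2 + 1),
      ?_, ?_, ?_, ?_, ?_, ?_, ?_, ?_, ⟨(0,0), trivial⟩, ?_⟩
    · exact fun x _ => ⟨t x.1 x.2, rfl, fun h hh => hh.symm⟩
    · exact fun _ _ _ => trivial
    · exact fun x _ => ⟨(x.1 + 1, x.2), rfl, trivial⟩
    · exact fun x _ => ⟨(x.1, x.2 + 1), rfl, trivial⟩
    · rintro x y y' _ rfl rfl; rfl
    · rintro x y y' _ rfl rfl; rfl
    · rintro h h' x y rfl rfl rfl; exact hH x.1 x.2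
    · rintro h h' x y rfl rfl rfl; exact hV x.1 x.2
    · rintro x y z y' z' rfl rfl rfl rfl; rfl
  · rintro ⟨Δ, Tile, Dp, Right, Up, hpart, _, hR, hU, hRf, hUf, hHadj, hVadj,
      ⟨x0, hx0⟩, hconf⟩
    classical
    set R : Δ → Δ := fun x => if h : Tile x then (hR x h).choose else x with hRdef
    set U : Δ → Δ := fun x => if h : Tile x then (hU x h).choose else x with hUdef
    have hRspec : ∀ x, Tile x → Right x (R x) ∧ Tile (R x) := by
      intro x hx; simp only [hRdef, dif_pos hx]; exact (hR x hx).choose_spec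
    have hUspec : ∀ x, Tile x → Up x (U x) ∧ Tile (U x) := by
      intro x hx; simp only [hUdef, dif_pos hx]; exact (hU x hx).choose_spec
    -- commutation
    have hcomm : ∀ x, Tile x → U (R x) = R (U x) := by
      intro x hx
      have h1 := hRspec x hx
      have h2 := hUspec (R x) h1.2
      have h3 := hUspec x hx
      have h4 := hRspec (U x) h3.2
      exact hconf x (R x) (U (R x)) (U x) (R (U x)) h1.1 h2.1 h3.1 h4.1
    set p : ℕ → ℕ → Δ := fun i j => U^[j] (R^[i] x0) with hpdef
    have hTileR : ∀ i, Tile (R^[i] x0) := by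
      intro i; induction i with
      | zero => exact hx0
      | succ n ih => rw [Function.iterate_succ_apply']; exact (hRspec _ ih).2
    have hTilep : ∀ i j, Tile (p i j) := by
      intro i j; induction j with
      | zero => exact hTileR i
      | succ n ih =>
        show Tile (U^[n+1] (R^[i] x0))
        rw [Function.iterate_succ_apply']; exact (hUspec _ ih).2
    have hcommIter : ∀ (j : ℕ) (x : Δ), Tile x → U^[j] (R x) = R (U^[j] x) := by
      intro j; induction j with
      | zero => intro x _; rfl
      | succ n ih =>
        intro x hx
        rw [Function.iterate_succ_apply', Function.iterate_succ_apply', ih x hx]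
        exact hcomm _ (by
          have : Tile (U^[n] x) := by
            clear ih
            induction n with
            | zero => exact hx
            | succ m ihm => rw [Function.iterate_succ_apply']; exact (hUspec _ ihm).2
          exact this)
    have hRight : ∀ i j, Right (p i j) (p (i + 1) j) := by
      intro i j
      have : p (i + 1) j = R (p i j) := by
        show U^[j] (R^[i+1] x0) = R (U^[j] (R^[i] x0))
        rw [Function.iterate_succ_apply', hcommIter j _ (hTileR i)]
      rw [this]
      exact (hRspec _ (hTilep i j)).1
    have hUp : ∀ i j, Up (p i j) (p i (j + 1)) := by
      intro i j
      have : p i (j + 1) = U (p i j) := by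
        show U^[j+1] (R^[i] x0) = U (U^[j] (R^[i] x0))
        rw [Function.iterate_succ_apply']
      rw [this]
      exact (hUspec _ (hTilep i j)).1
    refine ⟨fun i j => (hpart (p i j) (hTilep i j)).choose, ?_, ?_⟩
    · intro i j
      exact hHadj _ _ (p i j) (p (i+1) j)
        (hpart (p i j) (hTilep i j)).choose_spec.1 (hRight i j)
        (hpart (p (i+1) j) (hTilep (i+1) j)).choose_spec.1
    · intro i j
      exact hVadj _ _ (p i j) (p i (j+1))
        (hpart (p i j) (hTilep i j)).choose_spec.1 (hUp i j)
        (hpart (p i (j+1)) (hTilep i (j+1))).choose_spec.1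
end

section
/- If a tuple-graph g is homomorphically embeddable into a structure M (i.e., there is a map η from nodes of g to elements of M such that node labels are satisfied at their images and each edge labeled f_i is realized by the relation f_i of M, and nodes labeled by constant names map into the interpretation of the corresponding name predicate), then for the formula-template δ built from g by a depth-first postorder traversal, there is a substitution θ of the placeholders such that δθ is satisfied at some element of M. -/
/-- A formula-template obtained by a depth-first postorder traversal of (a connected
component of) a tuple-graph.  A node of the tree carries: the placeholder (named by
the graph node `ν` it comes from), the list of (semantic) formulae labelling the
graph node, the tree children each reached by an edge labelled by an atomic program
`P` together with a direction flag (`true` for a forward edge `⟨f⟩`, `false` for a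
backward edge `⟨f⁻⟩`), and the back-edges `⟨f⟩ t` to already visited nodes. -/
inductive TTree (ν S P : Type) : Type where
  | node : ν → List (S → Prop) → (k : ℕ) → (Fin k → P × Bool) →
      (Fin k → TTree ν S P) → List (P × ν) → TTree ν S P

/-- The root placeholder of a template. -/
def TTree.root {ν S P : Type} : TTree ν S P → ν
  | .node n _ _ _ _ _ => n

/-- Satisfaction of the template under a substitution `θ` of the placeholders by
formulae, at a state `s` of a Kripke structure with accessibility relations `rel`. -/
def TTree.sat {ν S P : Type} (rel : P → S → S → Prop) (θ : ν → S → Prop) :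
    TTree ν S P → S → Prop
  | .node n labs k lb ch backs, s =>
      θ n s ∧ (∀ φ ∈ labs, φ s) ∧
      (∀ i : Fin k, ∃ s',
        (if (lb i).2 then rel (lb i).1 s s' else rel (lb i).1 s' s) ∧
        TTree.sat rel θ (ch i) s') ∧
      (∀ b ∈ backs, ∃ s', rel b.1 s s' ∧ θ b.2 s')

/-- `η` is a homomorphism of the tuple-graph underlying the template into the Kripke
structure: every node label is satisfied at the image of the node, and every edge
(tree edge, in either direction, or back-edge) is realized by the corresponding
relation of the structure. -/
def TTree.compat {ν S P : Type} (rel : P → S → S → Prop) (η : ν → S) :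
    TTree ν S P → Prop
  | .node n labs k lb ch backs =>
      (∀ φ ∈ labs, φ (η n)) ∧
      (∀ i : Fin k,
        (if (lb i).2 then rel (lb i).1 (η n) (η (ch i).root)
         else rel (lb i).1 (η (ch i).root) (η n)) ∧
        TTree.compat rel η (ch i)) ∧
      (∀ b ∈ backs, rel b.1 (η n) (η b.2))

theorem TTree.sat_of_compat {ν S P : Type} (rel : P → S → S → Prop) (η : ν → S) :
    ∀ t : TTree ν S P, t.compat rel η →
      t.sat rel (fun n s => s = η n) (η t.root)
  | .node n labs k lb ch backs, h => by
    obtain ⟨h1, h2, h3⟩ := h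
    refine ⟨rfl, h1, fun i => ⟨η (ch i).root, (h2 i).1,
      TTree.sat_of_compat rel η (ch i) (h2 i).2⟩,
      fun b hb => ⟨η b.2, h3 b hb, rfl⟩⟩

/-- If a tuple-graph is homomorphically embeddable into a Kripke
structure, then there is a substitution `θ` of the placeholders such that the
formula-template built from the graph is satisfied at some state. -/
theorem stmt7 {ν S P : Type} (rel : P → S → S → Prop) (η : ν → S)
    (t : TTree ν S P) (h : t.compat rel η) :
    ∃ (θ : ν → S → Prop) (s : S), t.sat rel θ s :=
  ⟨_, _, t.sat_of_compat rel η h⟩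
end

section
/- The number of disjuncts generated by the encoding is bounded as follows: given a conjunct with ℓ₂ existentially quantified variables, the number of partitions of these variables is the Bell number B(ℓ₂) ≤ ℓ₂^{ℓ₂} ≤ 2^{ℓ₂ log ℓ₂}, and for each partition, if ℓ'₂ variables occur on cycles of the associated tuple-graph and there are ℓ₁ available names, the number of placeholder instantiations is at most ℓ₁^{ℓ'₂}. Hence the total number of disjuncts in the encoding Φ_{conj'} is at most B(ℓ₂) · ℓ₁^{ℓ₂}, which is 2^{O(ℓ₂ log(ℓ₁ + ℓ₂))}. -/
open scoped Classical

/-- Map a setoid on `Fin n` to the function sending each element to the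
minimum of its equivalence class. -/
private noncomputable def setoidToFun {n : ℕ} (s : Setoid (Fin n)) : Fin n → Fin n :=
  fun i => (Finset.univ.filter (fun j => s.r i j)).min' ⟨i, by simpa using s.refl i⟩

private lemma setoidToFun_rel {n : ℕ} (s : Setoid (Fin n)) (i j : Fin n) :
    s.r i j ↔ setoidToFun s i = setoidToFun s j := by
  constructor
  · intro h
    unfold setoidToFun
    congr 1
    ext k
    simp only [Finset.mem_filter]
    exact and_congr_right (fun _ => ⟨fun h' => s.trans (s.symm h) h', fun h' => s.trans h h'⟩)
  · intro h
    have hi : setoidToFun s i ∈ Finset.univ.filter (fun j => s.r i j) := Finset.min'_mem _ _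
    have hj : setoidToFun s j ∈ Finset.univ.filter (fun k => s.r j k) := Finset.min'_mem _ _
    rw [h] at hi
    simp only [Finset.mem_filter] at hi hj
    exact s.trans hi.2 (s.symm hj.2)

private lemma setoidToFun_inj {n : ℕ} : Function.Injective (@setoidToFun n) := by
  intro s t h
  ext i j
  rw [show (s i j) = s.r i j from rfl, show (t i j) = t.r i j from rfl,
    setoidToFun_rel, setoidToFun_rel, h]

private lemma card_setoid_le (n : ℕ) : Nat.card (Setoid (Fin n)) ≤ n ^ n := by
  have := Nat.card_le_card_of_injective _ (@setoidToFun_inj n)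
  simpa [Nat.card_eq_fintype_card] using this

/-- Counting the disjuncts of the encoding.  The number of partitions
of the `ℓ₂` existential variables (the Bell number, realized as the number of
setoids on `Fin ℓ₂`) is at most `ℓ₂ ^ ℓ₂ ≤ 2 ^ (ℓ₂ log ℓ₂)`; for each partition,
with `ℓ'₂ ≤ ℓ₂` variables on cycles and `ℓ₁` available name-formulae, the number of
placeholder instantiations is `ℓ₁ ^ ℓ'₂`; hence the total number of disjuncts is at
most `B(ℓ₂) · ℓ₁ ^ ℓ₂ ≤ ℓ₂ ^ ℓ₂ · ℓ₁ ^ ℓ₂`. -/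
theorem stmt17 (l1 l2 l2' : ℕ) (hl : l2' ≤ l2) (hl2 : 1 ≤ l2) (hl1 : 1 ≤ l1) :
    Nat.card (Setoid (Fin l2)) ≤ l2 ^ l2 ∧
    l2 ^ l2 ≤ 2 ^ (l2 * (Nat.log 2 l2 + 1)) ∧
    Nat.card (Fin l2' → Fin l1) = l1 ^ l2' ∧
    Nat.card (Setoid (Fin l2) × (Fin l2' → Fin l1)) ≤ l2 ^ l2 * l1 ^ l2 := by
  refine ⟨card_setoid_le l2, ?_, ?_, ?_⟩
  · have h : l2 ≤ 2 ^ (Nat.log 2 l2 + 1) :=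
      (Nat.lt_pow_succ_log_self (by norm_num) l2).le
    calc l2 ^ l2 ≤ (2 ^ (Nat.log 2 l2 + 1)) ^ l2 := Nat.pow_le_pow_left h l2
      _ = 2 ^ (l2 * (Nat.log 2 l2 + 1)) := by rw [← pow_mul, mul_comm]
  · simp [Nat.card_eq_fintype_card]
  · rw [Nat.card_prod]
    have h1 : Nat.card (Fin l2' → Fin l1) = l1 ^ l2' := by
      simp [Nat.card_eq_fintype_card]
    rw [h1]
    exact Nat.mul_le_mul (card_setoid_le l2)
      (Nat.pow_le_pow_right hl1 hl)
end
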